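/- arXiv:2202.10607 — 10 statements merged into one kernel-verified Lean document; each statement's English description precedes it below -/
import Mathlib

section
/- Let q, j be integers with 1 ≤ j ≤ q, let δ > 0 be real, and set δ* = (q+1−j)/j. If x > 0 is a real number with P(x) = 0 (a positive root of P), then: x > 1 if and only if δ > δ*; x = 1 if and only if δ = δ*; and x < 1 if and only if δ < δ*. -/
/-- a positive root `x` of `P` satisfies `x > 1` iff `δ > δ*`,
`x = 1` iff `δ = δ*`, and `x < 1` iff `δ < δ*`, where `δ* = (q+1−j)/j`. -/
theorem stmt_2 (q j : ℕ) (hj : 1 ≤ j) (hjq : j ≤ q) (δ : ℝ) (hδ : 0 < δ)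
    (x : ℝ) (hx : 0 < x)
    (hroot : (∑ k ∈ Finset.Icc j q, x ^ k) - δ * ∑ k ∈ Finset.range j, x ^ k = 0) :
    (1 < x ↔ ((q : ℝ) + 1 - j) / j < δ) ∧
    (x = 1 ↔ δ = ((q : ℝ) + 1 - j) / j) ∧
    (x < 1 ↔ δ < ((q : ℝ) + 1 - j) / j) := by
  set N : ℝ := ∑ k ∈ Finset.Icc j q, x ^ k with hN
  set D : ℝ := ∑ k ∈ Finset.range j, x ^ k with hD
  set c : ℝ := (q : ℝ) + 1 - j with hc
  have jpos : (0:ℝ) < (j:ℝ) := by exact_mod_cast hj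
  have hcpos : 0 < c := by
    have : (j:ℝ) ≤ q := by exact_mod_cast hjq
    linarith
  have hDpos : 0 < D := by
    apply Finset.sum_pos (fun k _ => pow_pos hx k)
    exact ⟨0, Finset.mem_range.mpr hj⟩
  have hNδ : N = δ * D := by linarith [hroot]
  have hcardI : ((Finset.Icc j q).card : ℝ) = c := by
    rw [Nat.card_Icc, hc]
    have : j ≤ q + 1 := le_trans hjq (Nat.le_succ q)
    push_cast [Nat.cast_sub this]
    ring
  have hcardR : ((Finset.range j).card : ℝ) = (j:ℝ) := by simp
  -- forward direction for x > 1
  have fwd_gt : 1 < x → c / j < δ := by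
    intro hx1
    have hNb : c * x ^ j ≤ N := by
      have := Finset.card_nsmul_le_sum (Finset.Icc j q) (fun k => x ^ k) (x ^ j)
        (fun k hk => pow_le_pow_right₀ hx1.le (Finset.mem_Icc.mp hk).1)
      rwa [nsmul_eq_mul, hcardI] at this
    have hDb : D ≤ (j:ℝ) * x ^ (j - 1) := by
      have := Finset.sum_le_card_nsmul (Finset.range j) (fun k => x ^ k) (x ^ (j - 1))
        (fun k hk => pow_le_pow_right₀ hx1.le
          (Nat.le_sub_one_of_lt (Finset.mem_range.mp hk)))
      rwa [nsmul_eq_mul, hcardR] at this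
    have hpow : x ^ (j - 1) < x ^ j :=
      pow_lt_pow_right₀ hx1 (Nat.sub_lt hj Nat.one_pos)
    have key : c * D < δ * (j:ℝ) * D := by
      calc c * D ≤ c * ((j:ℝ) * x ^ (j - 1)) := by
            exact mul_le_mul_of_nonneg_left hDb hcpos.le
        _ < c * ((j:ℝ) * x ^ j) := by
            apply mul_lt_mul_of_pos_left _ hcpos
            exact mul_lt_mul_of_pos_left hpow jpos
        _ = (j:ℝ) * (c * x ^ j) := by ring
        _ ≤ (j:ℝ) * N := mul_le_mul_of_nonneg_left hNb jpos.le
        _ = δ * (j:ℝ) * D := by rw [hNδ]; ring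
    rw [div_lt_iff₀ jpos]
    have := lt_of_mul_lt_mul_right key hDpos.le
    linarith
  -- forward direction for x = 1
  have fwd_eq : x = 1 → δ = c / j := by
    intro hx1
    subst hx1
    have hN1 : N = c := by
      rw [hN]
      simp [← hcardI]
    have hD1 : D = (j:ℝ) := by
      rw [hD]
      simp [← hcardR]
    rw [eq_div_iff jpos.ne']
    rw [hN1, hD1] at hNδ
    linarith
  -- forward direction for x < 1
  have fwd_lt : x < 1 → δ < c / j := by
    intro hx1
    have hNb : N ≤ c * x ^ j := by
      have := Finset.sum_le_card_nsmul (Finset.Icc j q) (fun k => x ^ k) (x ^ j)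
        (fun k hk => pow_le_pow_of_le_one hx.le hx1.le (Finset.mem_Icc.mp hk).1)
      rwa [nsmul_eq_mul, hcardI] at this
    have hDb : (j:ℝ) * x ^ (j - 1) ≤ D := by
      have := Finset.card_nsmul_le_sum (Finset.range j) (fun k => x ^ k) (x ^ (j - 1))
        (fun k hk => pow_le_pow_of_le_one hx.le hx1.le
          (Nat.le_sub_one_of_lt (Finset.mem_range.mp hk)))
      rwa [nsmul_eq_mul, hcardR] at this
    have hpow : x ^ j < x ^ (j - 1) :=
      pow_lt_pow_right_of_lt_one₀ hx hx1 (Nat.sub_lt hj Nat.one_pos)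
    have key : δ * (j:ℝ) * D < c * D := by
      calc δ * (j:ℝ) * D = (j:ℝ) * N := by rw [hNδ]; ring
        _ ≤ (j:ℝ) * (c * x ^ j) := mul_le_mul_of_nonneg_left hNb jpos.le
        _ = c * ((j:ℝ) * x ^ j) := by ring
        _ < c * ((j:ℝ) * x ^ (j - 1)) := by
            apply mul_lt_mul_of_pos_left _ hcpos
            exact mul_lt_mul_of_pos_left hpow jpos
        _ ≤ c * D := mul_le_mul_of_nonneg_left hDb hcpos.le
    rw [lt_div_iff₀ jpos]
    have := lt_of_mul_lt_mul_right key hDpos.le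
    linarith
  refine ⟨⟨fwd_gt, ?_⟩, ⟨fwd_eq, ?_⟩, ⟨fwd_lt, ?_⟩⟩
  · intro h
    rcases lt_trichotomy x 1 with h1 | h1 | h1
    · exact absurd h (not_lt.mpr (fwd_lt h1).le)
    · exact absurd h (not_lt.mpr (fwd_eq h1).le)
    · exact h1
  · intro h
    rcases lt_trichotomy x 1 with h1 | h1 | h1
    · exact absurd h (ne_of_lt (fwd_lt h1))
    · exact h1
    · exact absurd h (ne_of_gt (fwd_gt h1))
  · intro h
    rcases lt_trichotomy x 1 with h1 | h1 | h1
    · exact h1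
    · exact absurd h (not_lt.mpr (fwd_eq h1).ge)
    · exact absurd h (not_lt.mpr (fwd_gt h1).le)
end

section
/- Let q, j be integers with 1 ≤ j ≤ q, let δ > 0 be real, set δ* = (q+1−j)/j, and let x > 0 be a real number with P(x) = 0. Then Q'(x) = (q+1)·x^q − j·(1+δ)·x^{j−1} is strictly positive if δ > δ*, and strictly negative if δ < δ*. -/
/-!
Since `(λ - 1) P = Q`, a positive root `x` of `P` and `1` are roots of `Q`, distinct because
`P(1) = (q+1-j) - jδ` vanishes only for `δ = δ*`. Writing
`Q'(t) = t^(j-1) h(t)` with `h(t) = (q+1) t^(q+1-j) - j(1+δ)` strictly increasing on `[0, ∞)`,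
Rolle's theorem gives a zero of `h` strictly between `x` and `1`, so `h(x)` and `h(1)` have
opposite signs. As `h(1) = P(1)` has the sign of `δ* - δ`, `Q'(x)` has the sign of `δ - δ*`.
-/

open Finset Set

theorem sub_one_mul_geom_sum_sub_eq {R : Type*} [CommRing R] {q j : ℕ} (hjq : j ≤ q + 1)
    (δ x : R) :
    (x - 1) * ((∑ k ∈ Icc j q, x ^ k) - δ * ∑ k ∈ range j, x ^ k)
      = x ^ (q + 1) - (1 + δ) * x ^ j + δ := by
  rw [← Finset.Ico_add_one_right_eq_Icc]
  linear_combination geom_sum_Ico_mul x hjq - δ * geom_sum_mul x j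

theorem exists_mem_uIoo_deriv_eq_zero {f : ℝ → ℝ} {a b : ℝ} (hab : a ≠ b)
    (hf : ContinuousOn f (uIcc a b)) (hfab : f a = f b) : ∃ c ∈ uIoo a b, deriv f c = 0 := by
  rcases hab.lt_or_gt with h | h
  · obtain ⟨c, hc, hdc⟩ := exists_deriv_eq_zero h (hf.mono Icc_subset_uIcc) hfab
    exact ⟨c, Ioo_subset_uIoo hc, hdc⟩
  · obtain ⟨c, hc, hdc⟩ := exists_deriv_eq_zero h (hf.mono Icc_subset_uIcc') hfab.symm
    exact ⟨c, Ioo_subset_uIoo' hc, hdc⟩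

theorem StrictMonoOn.mul_neg_of_mem_uIoo {α β : Type*} [LinearOrder α] [Ring β] [LinearOrder β]
    [IsStrictOrderedRing β] {s : Set α} {h : α → β} (hh : StrictMonoOn h s)
    {a b c : α} (ha : a ∈ s) (hb : b ∈ s) (hc : c ∈ s) (hcab : c ∈ uIoo a b)
    (hc0 : h c = 0) : h a * h b < 0 := by
  rw [uIoo_eq_union] at hcab
  rcases hcab with ⟨hac, hcb⟩ | ⟨hbc, hca⟩
  · exact mul_neg_of_neg_of_pos (hc0 ▸ hh ha hc hac) (hc0 ▸ hh hc hb hcb)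
  · exact mul_neg_of_pos_of_neg (hc0 ▸ hh hc ha hca) (hc0 ▸ hh hb hc hbc)

namespace RootDerivSign

variable (q j : ℕ) (δ : ℝ)

def Q (t : ℝ) : ℝ := t ^ (q + 1) - (1 + δ) * t ^ j + δ

def derivFactor (t : ℝ) : ℝ := (q + 1) * t ^ (q + 1 - j) - j * (1 + δ)

variable {q j δ}

theorem hasDerivAt_Q (t : ℝ) :
    HasDerivAt (Q q j δ) ((q + 1) * t ^ q - (1 + δ) * (j * t ^ (j - 1))) t := by
  unfold Q
  simpa using
    (((hasDerivAt_pow (q + 1) t).sub ((hasDerivAt_pow j t).const_mul (1 + δ))).add_const δ)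

theorem pow_mul_derivFactor (hj : 1 ≤ j) (hjq : j ≤ q + 1) (t : ℝ) :
    t ^ (j - 1) * derivFactor q j δ t = (q + 1) * t ^ q - j * (1 + δ) * t ^ (j - 1) := by
  have hq : t ^ q = t ^ (j - 1) * t ^ (q + 1 - j) := by rw [← pow_add]; congr 1; omega
  rw [derivFactor, hq]
  ring

theorem derivFactor_strictMonoOn (hjq : j ≤ q) :
    StrictMonoOn (derivFactor q j δ) {t | 0 ≤ t} :=
  fun _ ha _ hb hab ↦ by
    have := pow_left_strictMonoOn₀ (M₀ := ℝ) (n := q + 1 - j) (by omega) ha hb hab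
    simp only [derivFactor]
    gcongr

theorem derivFactor_eq_zero_of_deriv_Q_eq_zero (hj : 1 ≤ j) (hjq : j ≤ q) {c : ℝ}
    (hc : 0 < c) (hdc : deriv (Q q j δ) c = 0) : derivFactor q j δ c = 0 := by
  have hfac := pow_mul_derivFactor (q := q) (δ := δ) hj (by omega) c
  rw [(hasDerivAt_Q c).deriv] at hdc
  have hprod : c ^ (j - 1) * derivFactor q j δ c = 0 := by linear_combination hfac + hdc
  exact (mul_eq_zero.mp hprod).resolve_left (pow_pos hc _).ne'

theorem derivFactor_mul_derivFactor_one_neg (hj : 1 ≤ j) (hjq : j ≤ q) {x : ℝ} (hx : 0 < x)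
    (hx1 : x ≠ 1) (hQ : Q q j δ x = 0) : derivFactor q j δ x * derivFactor q j δ 1 < 0 := by
  have hQ1 : Q q j δ 1 = 0 := by simp [Q]
  obtain ⟨c, hc, hdc⟩ :=
    exists_mem_uIoo_deriv_eq_zero hx1 (by unfold Q; fun_prop) (hQ.trans hQ1.symm)
  have hc0 : 0 < c := lt_of_le_of_lt (le_min hx.le zero_le_one) hc.1
  exact (derivFactor_strictMonoOn hjq).mul_neg_of_mem_uIoo hx.le (by simp) hc0.le hc
    (derivFactor_eq_zero_of_deriv_Q_eq_zero hj hjq hc0 hdc)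

theorem derivFactor_one (hjq : j ≤ q + 1) :
    derivFactor q j δ 1
      = (∑ k ∈ Icc j q, (1 : ℝ) ^ k) - δ * ∑ k ∈ range j, (1 : ℝ) ^ k := by
  simp only [derivFactor, one_pow, sum_const, Nat.card_Icc, card_range, nsmul_eq_mul, mul_one,
    Nat.cast_sub hjq, Nat.cast_add, Nat.cast_one]
  ring

end RootDerivSign

open RootDerivSign

theorem stmt_4_general (q j : ℕ) (hj : 1 ≤ j) (hjq : j ≤ q) (δ : ℝ)
    (x : ℝ) (hx : 0 < x)
    (hroot : (∑ k ∈ Finset.Icc j q, x ^ k) - δ * ∑ k ∈ Finset.range j, x ^ k = 0) :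
    (((q : ℝ) + 1 - j) / j < δ →
      0 < ((q : ℝ) + 1) * x ^ q - (j : ℝ) * (1 + δ) * x ^ (j - 1)) ∧
    (δ < ((q : ℝ) + 1 - j) / j →
      ((q : ℝ) + 1) * x ^ q - (j : ℝ) * (1 + δ) * x ^ (j - 1) < 0) := by
  have hj0 : (0 : ℝ) < j := by exact_mod_cast hj
  have hQ : Q q j δ x = 0 := by
    rw [Q, ← sub_one_mul_geom_sum_sub_eq (by omega), hroot, mul_zero]
  have hfactor_one : derivFactor q j δ 1 = (q + 1 - j) - δ * j := by simp only [derivFactor]; ring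
  have hx1 : derivFactor q j δ 1 ≠ 0 → x ≠ 1 := by
    rintro hne rfl
    exact hne ((derivFactor_one (by omega)).trans hroot)
  have hsign := derivFactor_mul_derivFactor_one_neg (δ := δ) hj hjq hx
  rw [← pow_mul_derivFactor hj (by omega), div_lt_iff₀ hj0, lt_div_iff₀ hj0]
  constructor
  · intro hgt
    have hneg : derivFactor q j δ 1 < 0 := by linarith
    exact mul_pos (pow_pos hx _) (pos_of_mul_neg_left (hsign (hx1 hneg.ne) hQ) hneg.le)
  · intro hlt
    have hpos : 0 < derivFactor q j δ 1 := by linarith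
    exact mul_neg_of_pos_of_neg (pow_pos hx _)
      (neg_of_mul_neg_left (hsign (hx1 hpos.ne') hQ) hpos.le)

/-- at a positive root `x` of `P`, the derivative
`Q'(x) = (q+1)·x^q − j·(1+δ)·x^{j−1}` is positive if `δ > δ*` and negative if
`δ < δ*`, where `δ* = (q+1−j)/j`. -/
theorem stmt_4 (q j : ℕ) (hj : 1 ≤ j) (hjq : j ≤ q) (δ : ℝ) (hδ : 0 < δ)
    (x : ℝ) (hx : 0 < x)
    (hroot : (∑ k ∈ Finset.Icc j q, x ^ k) - δ * ∑ k ∈ Finset.range j, x ^ k = 0) :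
    (((q : ℝ) + 1 - j) / j < δ →
      0 < ((q : ℝ) + 1) * x ^ q - (j : ℝ) * (1 + δ) * x ^ (j - 1)) ∧
    (δ < ((q : ℝ) + 1 - j) / j →
      ((q : ℝ) + 1) * x ^ q - (j : ℝ) * (1 + δ) * x ^ (j - 1) < 0) :=
  stmt_4_general q j hj hjq δ x hx hroot
end

section
/- Let q, j be integers with 1 ≤ j ≤ q, where j is odd and q is even, let δ > 0 be real, and let r₊ > 0 be the unique positive real root of P. Then there exists a real number r₋ < −r₊ with Q(r₋) = 0, and moreover every complex root z of Q satisfies |z| ≤ −r₋ = |r₋|. In particular, the root of Q (and of P) of largest modulus is real and negative. -/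
/-!
Since `(λ - 1) P = Q`, the positive root `r₊` of `P` is a root of `Q`. For `t > 0` put
`R(t) = t^(q+1) - (1+δ) t^j - δ`; because `q + 1` and `j` are odd, `Q(-t) = -R(t)`.
Now `R(r₊) = -2δ < 0`, so `R` has a root `s > r₊` and `r₋ = -s` is a root of `Q`.
A complex root `z` of `Q` satisfies `|z|^(q+1) ≤ (1+δ)|z|^j + δ`, i.e. `R(|z|) ≤ 0`, and
`R(t) / t^j = t^(q+1-j) - (1+δ) - δ / t^j` is strictly increasing, so `|z| ≤ s`.
-/

open Finset

theorem sub_one_mul_sum_Icc_sub_mul_geom_sum {R : Type*} [CommRing R] {j q : ℕ}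
    (hjq : j ≤ q + 1) (δ x : R) :
    (x - 1) * ((∑ k ∈ Icc j q, x ^ k) - δ * ∑ k ∈ range j, x ^ k) =
      x ^ (q + 1) - (1 + δ) * x ^ j + δ := by
  rw [← Ico_add_one_right_eq_Icc, sum_Ico_eq_sub _ hjq]
  linear_combination geom_sum_mul x (q + 1) - (1 + δ) * geom_sum_mul x j

theorem norm_pow_le_of_pow_eq_mul_pow_add {𝕜 : Type*} [NormedDivisionRing 𝕜] {n j : ℕ}
    {c d z : 𝕜} (h : z ^ n = c * z ^ j + d) : ‖z‖ ^ n ≤ ‖c‖ * ‖z‖ ^ j + ‖d‖ := by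
  rw [← norm_pow, h, ← norm_pow, ← norm_mul]
  exact norm_add_le _ _

theorem le_of_pow_le_mul_pow_add {n j : ℕ} (hjn : j < n) {a b s t : ℝ} (hb : 0 ≤ b)
    (hs : 0 < s) (hs_root : a * s ^ j + b ≤ s ^ n) (ht : t ^ n ≤ a * t ^ j + b) : t ≤ s := by
  obtain ⟨k, hk, rfl⟩ : ∃ k, k ≠ 0 ∧ n = j + k := ⟨n - j, by omega, by omega⟩
  rw [pow_add] at hs_root ht
  by_contra! hst
  have hsj : 0 < s ^ j := pow_pos hs j
  have hjst : s ^ j ≤ t ^ j := pow_le_pow_left₀ hs.le hst.le j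
  have hkst : s ^ k < t ^ k := pow_lt_pow_left₀ hst hs.le hk
  have hsk : a ≤ s ^ k := by nlinarith
  nlinarith [mul_le_mul_of_nonneg_right hjst (sub_nonneg.2 (hsk.trans hkst.le))]

theorem exists_gt_pow_eq_mul_pow_add {n j : ℕ} (hjn : j < n) {a b r : ℝ}
    (hr : r ^ n < a * r ^ j + b) : ∃ s, r < s ∧ s ^ n = a * s ^ j + b := by
  set T := max r 1 + |a| + |b|
  have hT1 : 1 ≤ T := by linarith [le_max_right r 1, abs_nonneg a, abs_nonneg b]
  have hrT : r ≤ T := by linarith [le_max_left r 1, abs_nonneg a, abs_nonneg b]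
  have hTj : 1 ≤ T ^ j := one_le_pow₀ hT1
  have hTn : a * T ^ j + b < T ^ n := calc
    a * T ^ j + b ≤ |a| * T ^ j + |b| * T ^ j := by
      gcongr
      · exact le_abs_self a
      · exact (le_abs_self b).trans (le_mul_of_one_le_right (abs_nonneg b) hTj)
    _ < T ^ j * T := by nlinarith [le_max_right r 1]
    _ ≤ T ^ n := by
      rw [← pow_succ]
      exact pow_le_pow_right₀ hT1 hjn
  obtain ⟨s, ⟨hrs, -⟩, hs⟩ := intermediate_value_Icc hrT
    (f := fun t : ℝ ↦ t ^ n - (a * t ^ j + b)) (by fun_prop)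
    (show (0 : ℝ) ∈ Set.Icc (r ^ n - (a * r ^ j + b)) (T ^ n - (a * T ^ j + b)) from
      ⟨by linarith, by linarith⟩)
  refine ⟨s, hrs.lt_of_ne ?_, by linarith [hs]⟩
  rintro rfl
  simp only at hs
  linarith

theorem stmt_6_general (q j : ℕ) (hjq : j ≤ q) (hjodd : Odd j) (hqeven : Even q)
    (δ : ℝ) (hδ : 0 < δ) (rp : ℝ) (hrp : 0 < rp)
    (hroot : (∑ k ∈ Finset.Icc j q, rp ^ k) - δ * ∑ k ∈ Finset.range j, rp ^ k = 0) :
    ∃ rm : ℝ, rm < -rp ∧ rm ^ (q + 1) - (1 + δ) * rm ^ j + δ = 0 ∧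
      ∀ z : ℂ, z ^ (q + 1) - ((1 : ℂ) + δ) * z ^ j + δ = 0 → ‖z‖ ≤ -rm := by
  have hjq' : j < q + 1 := by omega
  have hQ_rp : rp ^ (q + 1) - (1 + δ) * rp ^ j + δ = 0 := by
    rw [← sub_one_mul_sum_Icc_sub_mul_geom_sum hjq'.le, hroot, mul_zero]
  obtain ⟨s, hrps, hs⟩ :=
    exists_gt_pow_eq_mul_pow_add hjq' (a := 1 + δ) (b := δ) (r := rp) (by linarith)
  refine ⟨-s, neg_lt_neg hrps, ?_, fun z hz ↦ ?_⟩
  · rw [hqeven.add_one.neg_pow, hjodd.neg_pow]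
    linear_combination -hs
  · have hnorm := norm_pow_le_of_pow_eq_mul_pow_add (d := -(δ : ℂ))
      (by linear_combination hz : z ^ (q + 1) = ((1 : ℂ) + δ) * z ^ j + -δ)
    rw [norm_neg, Complex.norm_real, Real.norm_of_nonneg hδ.le,
      show (1 : ℂ) + δ = ((1 + δ : ℝ) : ℂ) by push_cast; ring, Complex.norm_real,
      Real.norm_of_nonneg (by linarith)] at hnorm
    rw [neg_neg]
    exact le_of_pow_le_mul_pow_add hjq' hδ.le (hrp.trans hrps) hs.ge hnorm

/-- for `j` odd, `q` even and `δ > 0`, `Q` has a real root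
`r₋ < −r₊`, and every complex root `z` of `Q` satisfies `|z| ≤ −r₋`; in
particular the root of largest modulus is real and negative. Here `r₊` is the
unique positive real root of `P(λ) = Σ_{k=j}^{q} λ^k − δ·Σ_{k=0}^{j−1} λ^k`
and `Q(λ) = λ^{q+1} − (1+δ)·λ^j + δ`. -/
theorem stmt_6 (q j : ℕ) (hj : 1 ≤ j) (hjq : j ≤ q) (hjodd : Odd j) (hqeven : Even q)
    (δ : ℝ) (hδ : 0 < δ) (rp : ℝ) (hrp : 0 < rp)
    (hroot : (∑ k ∈ Finset.Icc j q, rp ^ k) - δ * ∑ k ∈ Finset.range j, rp ^ k = 0)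
    (huniq : ∀ y : ℝ, 0 < y →
      (∑ k ∈ Finset.Icc j q, y ^ k) - δ * ∑ k ∈ Finset.range j, y ^ k = 0 → y = rp) :
    ∃ rm : ℝ, rm < -rp ∧ rm ^ (q + 1) - (1 + δ) * rm ^ j + δ = 0 ∧
      ∀ z : ℂ, z ^ (q + 1) - ((1 : ℂ) + δ) * z ^ j + δ = 0 → ‖z‖ ≤ -rm :=
  stmt_6_general q j hjq hjodd hqeven δ hδ rp hrp hroot
end

section
/- Let q, j be integers with 1 ≤ j ≤ q, let δ be real with 0 < δ < δ* = (q+1−j)/j. Then the polynomial Q has exactly j complex roots, counted with multiplicity, in the open unit disk {z ∈ ℂ : |z| < 1}. -/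
/-!
Write `Q = g + (X^{q+1} + δ)` with `g = -(1+δ) X^j`. Since
`Q(s) = (s - 1) (∑_{i ≤ q} s^i - (1+δ) ∑_{i < j} s^i)` and the second factor equals
`q + 1 - (1+δ) j > 0` at `s = 1`, there is `R < 1` with `s^{q+1} + δ < (1+δ) s^j` for all
`s ∈ [R, 1)`. Hence `|Q - g| < |g|` on the annulus `R ≤ |z| < 1`: `Q` has no roots there, and by
Rouché's theorem on `|z| = R` it has as many roots in `|z| < R` as `g`, namely `j`. Rouché's
theorem for polynomials follows from the argument principle, since `log (p / g)` is a primitive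
of `p'/p - g'/g` on the circle.
-/

open Polynomial Metric Complex Real Filter Topology

theorem CircleIntegrable.multiset_sum {ι E : Type*} [NormedAddCommGroup E]
    {s : Multiset ι} {f : ι → ℂ → E} {c : ℂ} {R : ℝ}
    (h : ∀ i ∈ s, CircleIntegrable (f i) c R) :
    CircleIntegrable (fun z => (s.map fun i => f i z).sum) c R := by
  induction s using Multiset.induction_on with
  | empty => simp
  | cons a s ih =>
    simp only [Multiset.map_cons, Multiset.sum_cons]
    exact (h a (Multiset.mem_cons_self a s)).add
      (ih fun i hi => h i (Multiset.mem_cons_of_mem hi))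

namespace circleIntegral

theorem integral_multiset_sum {ι E : Type*} [NormedAddCommGroup E] [NormedSpace ℂ E]
    {s : Multiset ι} {f : ι → ℂ → E} {c : ℂ} {R : ℝ}
    (h : ∀ i ∈ s, CircleIntegrable (f i) c R) :
    (∮ z in C(c, R), (s.map fun i => f i z).sum) = (s.map fun i => ∮ z in C(c, R), f i z).sum := by
  induction s using Multiset.induction_on with
  | empty => simp [circleIntegral]
  | cons a s ih =>
    have hs : ∀ i ∈ s, CircleIntegrable (f i) c R := fun i hi => h i (Multiset.mem_cons_of_mem hi)
    simp only [Multiset.map_cons, Multiset.sum_cons]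
    rw [integral_add (h a (Multiset.mem_cons_self a s)) (.multiset_sum hs), ih hs]

theorem integral_sub_inv_of_notMem_sphere {c w : ℂ} {R : ℝ} (hR : 0 ≤ R) (hw : w ∉ sphere c R) :
    (∮ z in C(c, R), (z - w)⁻¹) = if dist w c < R then 2 * π * I else 0 := by
  split_ifs with hwc
  · exact integral_sub_inv_of_mem_ball hwc
  · have hRw : R < dist w c := lt_of_le_of_ne (not_lt.mp hwc) (Ne.symm hw)
    have hne : ∀ z ∈ closedBall c R, z - w ≠ 0 := fun z hz h => by
      rw [sub_eq_zero.mp h, mem_closedBall] at hz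
      linarith
    refine Complex.circleIntegral_eq_zero_of_differentiable_on_off_countable hR Set.countable_empty
      ((continuousOn_id.sub continuousOn_const).inv₀ hne) fun z hz => ?_
    exact ((differentiableAt_id.sub_const w).inv (hne z (ball_subset_closedBall hz.1)))

end circleIntegral

theorem Multiset.sum_map_ite_eq_card_filter_nsmul {α M : Type*} [AddCommMonoid M] (s : Multiset α)
    (p : α → Prop) [DecidablePred p] (a : M) :
    (s.map fun x => if p x then a else 0).sum = Multiset.card (s.filter p) • a := by
  induction s using Multiset.induction_on with
  | empty => simp
  | cons x s ih => by_cases hx : p x <;> simp [hx, ih, add_nsmul, add_comm]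

namespace Polynomial

theorem circleIntegral_eval_derivative_div_eval {p : ℂ[X]} {c : ℂ} {R : ℝ} (hR : 0 ≤ R)
    (hp : ∀ z ∈ sphere c R, p.eval z ≠ 0) :
    (∮ z in C(c, R), p.derivative.eval z / p.eval z) =
      Multiset.card (p.roots.filter (dist · c < R)) • (2 * π * I) := by
  have hroots : ∀ r ∈ p.roots, r ∉ sphere c R := fun r hr hrR => hp r hrR (isRoot_of_mem_roots hr)
  have hsplit : Splits p := IsAlgClosed.splits p
  calc (∮ z in C(c, R), p.derivative.eval z / p.eval z)
      = ∮ z in C(c, R), (p.roots.map fun r => (z - r)⁻¹).sum := by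
        refine circleIntegral.integral_congr hR fun z hz => ?_
        simp only [hsplit.eval_derivative_div_eval_of_ne_zero (hp z hz), one_div]
    _ = (p.roots.map fun r => if dist r c < R then 2 * π * I else 0).sum := by
        rw [circleIntegral.integral_multiset_sum fun r hr => ?_]
        · exact congrArg _ <| Multiset.map_congr rfl fun r hr =>
            circleIntegral.integral_sub_inv_of_notMem_sphere hR (hroots r hr)
        · rw [circleIntegrable_sub_inv_iff, abs_of_nonneg hR]
          exact .inr (hroots r hr)
    _ = _ := Multiset.sum_map_ite_eq_card_filter_nsmul _ _ _

theorem hasDerivAt_log_eval_div_eval {p g : ℂ[X]} {z : ℂ} (hg : g.eval z ≠ 0)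
    (hslit : p.eval z / g.eval z ∈ slitPlane) :
    HasDerivAt (fun w => log (p.eval w / g.eval w))
      (p.derivative.eval z / p.eval z - g.derivative.eval z / g.eval z) z := by
  have hp : p.eval z ≠ 0 := by
    simpa [hg] using slitPlane_ne_zero hslit
  convert ((p.hasDerivAt z).fun_div (g.hasDerivAt z) hg).clog hslit using 1
  field_simp

theorem card_roots_filter_eq_of_norm_sub_lt {p g : ℂ[X]} {c : ℂ} {R : ℝ} (hR : 0 ≤ R)
    (h : ∀ z ∈ sphere c R, ‖p.eval z - g.eval z‖ < ‖g.eval z‖) :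
    Multiset.card (p.roots.filter (dist · c < R)) = Multiset.card (g.roots.filter (dist · c < R)) := by
  have hg : ∀ z ∈ sphere c R, g.eval z ≠ 0 := fun z hz =>
    norm_pos_iff.mp ((norm_nonneg _).trans_lt (h z hz))
  have hp : ∀ z ∈ sphere c R, p.eval z ≠ 0 := fun z hz hpz => by
    simpa [hpz] using h z hz
  have hslit : ∀ z ∈ sphere c R, p.eval z / g.eval z ∈ slitPlane := fun z hz => by
    have hlt : ‖-((g.eval z - p.eval z) / g.eval z)‖ < 1 := by
      rw [norm_neg, norm_div, div_lt_one (norm_pos_iff.mpr (hg z hz)), norm_sub_rev]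
      exact h z hz
    convert mem_slitPlane_of_norm_lt_one hlt using 1
    field_simp [hg z hz]
    ring
  have hcont : ∀ f : ℂ[X], (∀ z ∈ sphere c R, f.eval z ≠ 0) →
      CircleIntegrable (fun z => f.derivative.eval z / f.eval z) c R := fun f hf =>
    (f.derivative.continuous.continuousOn.div f.continuous.continuousOn hf).circleIntegrable hR
  have hdiff : (∮ z in C(c, R), p.derivative.eval z / p.eval z - g.derivative.eval z / g.eval z)
      = 0 := circleIntegral.integral_eq_zero_of_hasDerivWithinAt hR fun z hz =>
    (hasDerivAt_log_eval_div_eval (hg z hz) (hslit z hz)).hasDerivWithinAt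
  rw [circleIntegral.integral_sub (hcont p hp) (hcont g hg), sub_eq_zero,
    circleIntegral_eval_derivative_div_eval hR hp, circleIntegral_eval_derivative_div_eval hR hg]
    at hdiff
  rw [nsmul_eq_mul, nsmul_eq_mul] at hdiff
  exact_mod_cast mul_right_cancel₀ two_pi_I_ne_zero hdiff

theorem card_roots_filter_norm_lt_eq_of_norm_sub_lt {p g : ℂ[X]} {R r : ℝ} (hR : 0 ≤ R)
    (hRr : R < r) (h : ∀ z : ℂ, R ≤ ‖z‖ → ‖z‖ < r → ‖p.eval z - g.eval z‖ < ‖g.eval z‖) :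
    Multiset.card (p.roots.filter (‖·‖ < r)) = Multiset.card (g.roots.filter (‖·‖ < R)) := by
  have hp : ∀ z ∈ p.roots, ‖z‖ < r → ‖z‖ < R := fun z hz hzr => by
    by_contra! hRz
    simpa [(mem_roots'.mp hz).2.eq_zero] using h z hRz hzr
  have hsphere := card_roots_filter_eq_of_norm_sub_lt (p := p) (g := g) (c := 0) hR fun z hz => by
    rw [mem_sphere_zero_iff_norm] at hz
    exact h z hz.ge (hz ▸ hRr)
  simp only [dist_zero_right] at hsphere
  rw [← hsphere, Multiset.filter_congr fun z hz => ⟨hp z hz, fun h => h.trans hRr⟩]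

theorem card_roots_filter_norm_lt_C_mul_X_pow {K : Type*} [NormedField K] {a : K} (ha : a ≠ 0)
    {R : ℝ} (hR : 0 < R) (j : ℕ) : Multiset.card ((C a * X ^ j).roots.filter (‖·‖ < R)) = j := by
  rw [roots_C_mul _ ha, roots_X_pow, Multiset.nsmul_singleton,
    Multiset.filter_eq_self.mpr fun z hz => by simp [Multiset.eq_of_mem_replicate hz, hR],
    Multiset.card_replicate]

end Polynomial

theorem Complex.norm_pow_add_ofReal_le (z : ℂ) (n : ℕ) {δ : ℝ} (hδ : 0 ≤ δ) :
    ‖z ^ n + δ‖ ≤ ‖z‖ ^ n + δ :=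
  (norm_add_le _ _).trans_eq (by rw [norm_pow, Complex.norm_of_nonneg hδ])

theorem eventually_pow_add_lt_mul_pow {n j : ℕ} {δ : ℝ} (h : (1 + δ) * j < n) :
    ∀ᶠ s in 𝓝[<] (1 : ℝ), s ^ n + δ < (1 + δ) * s ^ j := by
  set P : ℝ → ℝ := fun s => ∑ i ∈ Finset.range n, s ^ i - (1 + δ) * ∑ i ∈ Finset.range j, s ^ i
  have hfactor : ∀ s, s ^ n + δ - (1 + δ) * s ^ j = (s - 1) * P s := fun s => by
    linear_combination (-1) * geom_sum_mul s n + (1 + δ) * geom_sum_mul s j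
  have hP1 : 0 < P 1 := by simpa [P] using h
  have hP : ∀ᶠ s in 𝓝[<] 1, 0 < P s :=
    nhdsWithin_le_nhds (continuousAt_const.eventually_lt (by fun_prop : Continuous P).continuousAt hP1)
  filter_upwards [hP, self_mem_nhdsWithin] with s hPs hs
  nlinarith [hfactor s, mul_neg_of_neg_of_pos (sub_neg.2 (Set.mem_Iio.1 hs)) hPs]

theorem stmt_7_general (q j : ℕ) (hj : 1 ≤ j) (δ : ℝ) (hδ : 0 < δ)
    (hδs : δ < ((q : ℝ) + 1 - j) / j) :
    Multiset.card ((((X : ℂ[X]) ^ (q + 1) - C ((1 : ℂ) + (δ : ℂ)) * X ^ j + C (δ : ℂ)).roots).filter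
      (fun z => ‖z‖ < 1)) = j := by
  have hδn : (1 + δ) * j < (q + 1 : ℕ) := by
    have := (lt_div_iff₀ (by exact_mod_cast hj : (0 : ℝ) < j)).mp hδs
    push_cast
    linarith
  obtain ⟨R, hR1, hR⟩ := mem_nhdsLT_iff_exists_Ico_subset.mp
    ((eventually_pow_add_lt_mul_pow hδn).and (Ioo_mem_nhdsLT zero_lt_one))
  have hR0 : 0 < R := (hR ⟨le_rfl, hR1⟩).2.1
  set Q : ℂ[X] := X ^ (q + 1) - C ((1 : ℂ) + δ) * X ^ j + C (δ : ℂ)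
  set g : ℂ[X] := C (-((1 : ℂ) + δ)) * X ^ j
  have hnorm : ‖(1 : ℂ) + δ‖ = 1 + δ := by
    exact_mod_cast Complex.norm_of_nonneg (by linarith : (0 : ℝ) ≤ 1 + δ)
  have hannulus : ∀ z : ℂ, R ≤ ‖z‖ → ‖z‖ < 1 → ‖Q.eval z - g.eval z‖ < ‖g.eval z‖ :=
    fun z hRz hz1 => calc
      ‖Q.eval z - g.eval z‖ = ‖z ^ (q + 1) + δ‖ := by
        simp only [Q, g, eval_add, eval_sub, eval_mul, eval_pow, eval_C, eval_X]
        ring_nf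
      _ ≤ ‖z‖ ^ (q + 1) + δ := norm_pow_add_ofReal_le z (q + 1) hδ.le
      _ < (1 + δ) * ‖z‖ ^ j := (hR ⟨hRz, hz1⟩).1
      _ = ‖g.eval z‖ := by rw [eval_mul, eval_C, eval_pow, eval_X, norm_mul, norm_neg, hnorm, norm_pow]
  have hne : -((1 : ℂ) + δ) ≠ 0 := neg_ne_zero.2 (norm_pos_iff.1 (by linarith [hnorm]))
  rw [card_roots_filter_norm_lt_eq_of_norm_sub_lt hR0.le hR1 hannulus,
    card_roots_filter_norm_lt_C_mul_X_pow hne hR0]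

/-- for `0 < δ < δ* = (q+1−j)/j`, the polynomial
`Q(λ) = λ^{q+1} − (1+δ)·λ^j + δ` has exactly `j` complex roots (with
multiplicity) in the open unit disk. -/
theorem stmt_7 (q j : ℕ) (hj : 1 ≤ j) (hjq : j ≤ q) (δ : ℝ) (hδ : 0 < δ)
    (hδs : δ < ((q : ℝ) + 1 - j) / j) :
    Multiset.card ((((X : ℂ[X]) ^ (q + 1) - C ((1 : ℂ) + (δ : ℂ)) * X ^ j + C (δ : ℂ)).roots).filter
      (fun z => ‖z‖ < 1)) = j :=
  stmt_7_general q j hj δ hδ hδs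
end

section
/- Let q, j be integers with 1 ≤ j ≤ q, let δ > δ* = (q+1−j)/j be real, and let r₊ be the unique positive real root of P (so r₊ > 1). Then Q has exactly j complex roots, counted with multiplicity, in the open disk {z ∈ ℂ : |z| < r₊}; consequently P has exactly j − 1 complex roots, counted with multiplicity, in that disk. -/
/-!
Since `P` has no positive root other than `r₊` and `P(0) = -δ < 0`, `P < 0` on `[0, r₊)`, so
`Q(x) = (x - 1) P(x) < 0` for `1 < x < r₊`, i.e. `x^(q+1) < (1 + δ) x^j - δ`. Hence on every circle
`‖z‖ = x` with `1 < x < r₊` the term `z^(q+1)` of `Q` is strictly dominated by the rest,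
`δ - (1 + δ) z^j`. This shows that `Q` has no root with `1 < ‖z‖ < r₊`, and by Rouché's theorem
(for polynomials `p`, `f` it holds because `log (p / f)` is a primitive of `p'/p - f'/f` on the
circle) `Q` has as many roots in the disc as `δ - (1 + δ) z^j`, all `j` of which lie in the unit
disc.
Removing the root `1` of `Q = (X - 1) P` leaves `j - 1` roots of `P`.
-/

open Polynomial Complex Metric

theorem left_ne_zero_of_norm_sub_lt {E : Type*} [SeminormedAddGroup E] {a b : E}
    (h : ‖a - b‖ < ‖b‖) : a ≠ 0 := by
  rintro rfl
  simp at h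

theorem right_ne_zero_of_norm_sub_lt {E : Type*} [SeminormedAddGroup E] {a b : E}
    (h : ‖a - b‖ < ‖b‖) : b ≠ 0 := by
  rintro rfl
  exact (norm_nonneg a).not_gt (by simpa using h)

theorem continuousOn_one_div_sub_sphere {c a : ℂ} {R : ℝ} (ha : dist a c ≠ R) :
    ContinuousOn (fun z => 1 / (z - a)) (sphere c R) :=
  continuousOn_const.div (continuousOn_id.sub continuousOn_const) fun z hz h0 =>
    ha (by rwa [← sub_eq_zero.1 h0])

theorem circleIntegral_one_div_sub {c a : ℂ} {R : ℝ} (hR : 0 ≤ R) (ha : dist a c ≠ R) :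
    (∮ z in C(c, R), 1 / (z - a)) = if dist a c < R then 2 * Real.pi * I else 0 := by
  simp only [one_div]
  split_ifs with hin
  · exact circleIntegral.integral_sub_inv_of_mem_ball hin
  · have hout : R < dist a c := lt_of_le_of_ne (not_lt.1 hin) ha.symm
    refine circleIntegral_eq_zero_of_differentiable_on_off_countable hR
      Set.countable_empty ?_ fun z hz => ?_
    · refine ContinuousOn.inv₀ (by fun_prop) fun z hz => sub_ne_zero.2 ?_
      rintro rfl
      exact (mem_closedBall.1 hz).not_gt hout
    · refine (differentiableAt_id.sub_const a).inv (sub_ne_zero.2 ?_)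
      rintro rfl
      exact (mem_ball.1 hz.1).not_gt hout

theorem circleIntegral_multiset_sum_one_div_sub {c : ℂ} {R : ℝ} (hR : 0 ≤ R) (s : Multiset ℂ)
    (hs : ∀ a ∈ s, dist a c ≠ R) :
    (∮ z in C(c, R), (s.map fun a => 1 / (z - a)).sum)
      = 2 * Real.pi * I * Multiset.card (s.filter fun a => dist a c < R) := by
  induction s using Multiset.induction_on with
  | empty => simp [circleIntegral]
  | cons a t ih =>
    have ha := hs a (Multiset.mem_cons_self a t)
    have ht : ∀ b ∈ t, dist b c ≠ R := fun b hb => hs b (Multiset.mem_cons_of_mem hb)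
    have hint_t : CircleIntegrable (fun z => (t.map fun b => 1 / (z - b)).sum) c R :=
      (continuousOn_multiset_sum t fun b hb =>
        continuousOn_one_div_sub_sphere (ht b hb)).circleIntegrable hR
    simp only [Multiset.map_cons, Multiset.sum_cons]
    rw [circleIntegral.integral_add
      ((continuousOn_one_div_sub_sphere ha).circleIntegrable hR) hint_t, ih ht,
      circleIntegral_one_div_sub hR ha, Multiset.filter_cons]
    split_ifs <;> simp; ring

theorem Polynomial.circleIntegral_logDeriv_eq {p : ℂ[X]} {c : ℂ} {R : ℝ} (hR : 0 ≤ R)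
    (hp : ∀ z ∈ sphere c R, p.eval z ≠ 0) :
    (∮ z in C(c, R), p.derivative.eval z / p.eval z)
      = 2 * Real.pi * I * Multiset.card (p.roots.filter fun a => dist a c < R) := by
  have hroots : ∀ a ∈ p.roots, dist a c ≠ R := fun a ha hac =>
    hp a (mem_sphere.2 hac) (isRoot_of_mem_roots ha)
  rw [← circleIntegral_multiset_sum_one_div_sub hR _ hroots]
  exact circleIntegral.integral_congr hR fun z hz =>
    (IsAlgClosed.splits p).eval_derivative_div_eval_of_ne_zero (hp z hz)

theorem Polynomial.circleIntegral_logDeriv_eq_of_norm_sub_lt {p f : ℂ[X]} {c : ℂ} {R : ℝ}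
    (hR : 0 ≤ R) (h : ∀ z ∈ sphere c R, ‖p.eval z - f.eval z‖ < ‖f.eval z‖) :
    (∮ z in C(c, R), p.derivative.eval z / p.eval z)
      = ∮ z in C(c, R), f.derivative.eval z / f.eval z := by
  have hf : ∀ z ∈ sphere c R, f.eval z ≠ 0 := fun z hz => right_ne_zero_of_norm_sub_lt (h z hz)
  have hp : ∀ z ∈ sphere c R, p.eval z ≠ 0 := fun z hz => left_ne_zero_of_norm_sub_lt (h z hz)
  have hint : ∀ g : ℂ[X], (∀ z ∈ sphere c R, g.eval z ≠ 0) →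
      CircleIntegrable (fun z => g.derivative.eval z / g.eval z) c R := fun g hg =>
    (g.derivative.continuous.continuousOn.div g.continuous.continuousOn hg).circleIntegrable hR
  rw [← sub_eq_zero, ← circleIntegral.integral_sub (hint p hp) (hint f hf)]
  refine circleIntegral.integral_eq_zero_of_hasDerivWithinAt
    (f := fun z => log (p.eval z / f.eval z)) hR fun z hz => ?_
  -- `log (p / f)` is a primitive on the circle, since `p / f` stays in the disc `ball 1 1`
  have hslit : p.eval z / f.eval z ∈ slitPlane := ball_one_subset_slitPlane <| by
    rw [mem_ball, dist_eq_norm, div_sub_one (hf z hz), norm_div,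
      div_lt_one (norm_pos_iff.2 (hf z hz))]
    exact h z hz
  convert (((p.hasDerivAt z).fun_div (f.hasDerivAt z) (hf z hz)).clog hslit).hasDerivWithinAt
    using 1
  field_simp [hp z hz, hf z hz]

theorem Polynomial.card_roots_filter_eq_of_norm_sub_lt_s8 {p f : ℂ[X]} {c : ℂ} {R : ℝ} (hR : 0 ≤ R)
    (h : ∀ z ∈ sphere c R, ‖p.eval z - f.eval z‖ < ‖f.eval z‖) :
    Multiset.card (p.roots.filter fun a => dist a c < R)
      = Multiset.card (f.roots.filter fun a => dist a c < R) := by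
  have hint := circleIntegral_logDeriv_eq_of_norm_sub_lt hR h
  rw [circleIntegral_logDeriv_eq hR fun z hz => left_ne_zero_of_norm_sub_lt (h z hz),
    circleIntegral_logDeriv_eq hR fun z hz => right_ne_zero_of_norm_sub_lt (h z hz)] at hint
  exact_mod_cast mul_left_cancel₀ (by simp [Real.pi_ne_zero, I_ne_zero]) hint

theorem Polynomial.card_roots_filter_X_sub_C_mul {K : Type*} [Field K] {p : K[X]} (hp : p ≠ 0)
    {a : K} {S : K → Prop} [DecidablePred S] (ha : S a) :
    Multiset.card (((X - C a) * p).roots.filter S) = Multiset.card (p.roots.filter S) + 1 := by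
  rw [roots_mul (mul_ne_zero (X_sub_C_ne_zero a) hp), roots_X_sub_C, Multiset.filter_add,
    Multiset.card_add, Multiset.filter_singleton, if_pos ha, Multiset.card_singleton, add_comm]

theorem Polynomial.card_roots_C_sub_C_mul_X_pow_filter {a b : ℂ} (hab : ‖a‖ < ‖b‖) (j : ℕ) {r : ℝ}
    (hr : 1 ≤ r) : Multiset.card ((C a - C b * X ^ j).roots.filter fun z => dist z 0 < r) = j := by
  have hb : b ≠ 0 := norm_pos_iff.1 ((norm_nonneg a).trans_lt hab)
  have hdeg : (C a - C b * X ^ j).natDegree = j := by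
    rw [sub_eq_neg_add, ← neg_mul, ← C_neg, natDegree_add_C,
      natDegree_C_mul_X_pow _ _ (neg_ne_zero.2 hb)]
  rw [Multiset.filter_eq_self.2, IsAlgClosed.card_roots_eq_natDegree, hdeg]
  intro z hz
  have hroot : a = b * z ^ j := by
    simpa [sub_eq_zero] using isRoot_of_mem_roots hz
  have hz1 : ‖z‖ ^ j < 1 := by
    rw [hroot, norm_mul, norm_pow] at hab
    nlinarith [norm_pos_iff.2 hb]
  rw [dist_zero_right]
  by_contra! hzr
  exact hz1.not_ge (one_le_pow₀ (hr.trans hzr))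

namespace Trinomial

variable {R : Type*} [CommRing R]

/- `P` and `Q` are the paper's polynomials, written over any commutative ring so that they serve
both as real functions and, at `x = X` and with `C δ` for `δ`, as complex polynomials. -/

def P (q j : ℕ) (δ x : R) : R := (∑ k ∈ Finset.Icc j q, x ^ k) - δ * ∑ k ∈ Finset.range j, x ^ k

def Q (q j : ℕ) (δ x : R) : R := x ^ (q + 1) - (1 + δ) * x ^ j + δ

variable {q j : ℕ}

theorem eval_Q (a z : R) : (Q q j (C a) X).eval z = Q q j a z := by
  simp [Q]

section CommRing

variable {δ : R}

theorem sub_one_mul_P (hjq : j ≤ q + 1) (x : R) : (x - 1) * P q j δ x = Q q j δ x := by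
  have hIcc : ∑ k ∈ Finset.Icc j q, x ^ k
      = (∑ k ∈ Finset.range (q + 1), x ^ k) - ∑ k ∈ Finset.range j, x ^ k := by
    rw [eq_sub_iff_add_eq, Finset.range_eq_Ico, Finset.range_eq_Ico,
      ← Finset.Ico_add_one_right_eq_Icc, add_comm, Finset.sum_Ico_consecutive _ (Nat.zero_le j) hjq]
  rw [P, Q, hIcc]
  linear_combination geom_sum_mul x (q + 1) - (1 + δ) * geom_sum_mul x j

theorem P_zero (hj : 1 ≤ j) : P q j δ 0 = -δ := by
  obtain ⟨i, rfl⟩ := Nat.exists_eq_add_of_le' hj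
  have hIcc : ∑ k ∈ Finset.Icc (i + 1) q, (0 : R) ^ k = 0 :=
    Finset.sum_eq_zero fun k hk => zero_pow (by grind)
  simp [P, Finset.sum_range_succ', hIcc]

theorem P_one : P q j δ 1 = (q + 1 - j : ℕ) - δ * j := by
  simp [P]

end CommRing

section Real

variable {δ : ℝ}

theorem P_one_neg (hj : 1 ≤ j) (hjq : j ≤ q) (hδs : ((q : ℝ) + 1 - j) / j < δ) :
    P q j δ 1 < 0 := by
  rw [P_one, Nat.cast_sub (by omega)]
  push_cast
  linarith [(div_lt_iff₀ (by exact_mod_cast hj : (0 : ℝ) < j)).1 hδs]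

theorem pos_of_P_one_neg (hjq : j ≤ q) (hP1 : P q j δ 1 < 0) : 0 < δ := by
  rw [P_one, Nat.cast_sub (by omega)] at hP1
  push_cast at hP1
  have : (j : ℝ) ≤ q := by exact_mod_cast hjq
  exact pos_of_mul_pos_left (by linarith) (Nat.cast_nonneg j)

theorem continuous_P : Continuous (P q j δ) := by
  unfold P; fun_prop

theorem Q_one_add_pos (hjq : j ≤ q) (hδ : 0 < δ) : 0 < Q q j δ (1 + δ) := by
  have : (1 + δ) ^ (j + 1) ≤ (1 + δ) ^ (q + 1) := pow_le_pow_right₀ (by linarith) (by omega)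
  rw [pow_succ] at this
  rw [Q]
  linarith

variable {rp : ℝ} (huniq : ∀ y : ℝ, 0 < y → P q j δ y = 0 → y = rp)
include huniq

theorem P_neg_of_lt (hj : 1 ≤ j) (hδ : 0 < δ) {x : ℝ} (hx : 0 ≤ x) (hxrp : x < rp) :
    P q j δ x < 0 := by
  by_contra! hPx
  obtain ⟨y, hy, hPy⟩ := intermediate_value_Icc hx continuous_P.continuousOn
    (show (0 : ℝ) ∈ Set.Icc (P q j δ 0) (P q j δ x) by rw [P_zero hj]; exact ⟨by linarith, hPx⟩)
  have hy0 : y ≠ 0 := by rintro rfl; linarith [P_zero (q := q) (δ := δ) hj]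
  linarith [hy.2, huniq y (lt_of_le_of_ne hy.1 hy0.symm) hPy]

theorem Q_neg_of_lt (hj : 1 ≤ j) (hjq : j ≤ q) (hδ : 0 < δ) {x : ℝ} (hx : 1 < x)
    (hxrp : x < rp) : Q q j δ x < 0 := by
  rw [← sub_one_mul_P (by omega)]
  exact mul_neg_of_pos_of_neg (by linarith) (P_neg_of_lt huniq hj hδ (by linarith) hxrp)

theorem one_lt_of_forall_P_eq_zero (hjq : j ≤ q) (hδ : 0 < δ) (hP1 : P q j δ 1 < 0) :
    1 < rp := by
  have hP : 0 < P q j δ (1 + δ) := by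
    have := Q_one_add_pos hjq hδ
    rw [← sub_one_mul_P (by omega), add_sub_cancel_left] at this
    exact pos_of_mul_pos_right this hδ.le
  obtain ⟨y, hy, hPy⟩ := intermediate_value_Icc (by linarith : (1 : ℝ) ≤ 1 + δ)
    continuous_P.continuousOn ⟨hP1.le, hP.le⟩
  have hy1 : y ≠ 1 := by rintro rfl; linarith
  rw [← huniq y (by linarith [hy.1]) hPy]
  exact lt_of_le_of_ne hy.1 hy1.symm


theorem norm_eval_Q_sub_lt (hj : 1 ≤ j) (hjq : j ≤ q) (hδ : 0 < δ) {z : ℂ}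
    (hz1 : 1 < ‖z‖) (hzrp : ‖z‖ < rp) :
    ‖(Q q j (C (δ : ℂ)) X).eval z - (C (δ : ℂ) - C (1 + (δ : ℂ)) * X ^ j).eval z‖
      < ‖(C (δ : ℂ) - C (1 + (δ : ℂ)) * X ^ j).eval z‖ := by
  have hQ := Q_neg_of_lt huniq hj hjq hδ hz1 hzrp
  rw [eval_Q]
  simp only [Q, eval_sub, eval_mul, eval_C, eval_pow, eval_X] at hQ ⊢
  calc ‖z ^ (q + 1) - (1 + δ) * z ^ j + δ - (δ - (1 + δ) * z ^ j)‖
      = ‖z‖ ^ (q + 1) := by rw [← norm_pow]; ring_nf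
    _ < (1 + δ) * ‖z‖ ^ j - δ := by linarith
    _ = ‖((1 + δ : ℝ) : ℂ) * z ^ j‖ - ‖(δ : ℂ)‖ := by
      rw [norm_mul, norm_pow, Complex.norm_real, Complex.norm_real, Real.norm_of_nonneg hδ.le,
        Real.norm_of_nonneg (by linarith)]
    _ ≤ ‖(δ : ℂ) - (1 + δ) * z ^ j‖ := by
      rw [norm_sub_rev]; push_cast; exact norm_sub_norm_le _ _

theorem card_roots_Q_filter_norm_lt (hj : 1 ≤ j) (hjq : j ≤ q) (hδ : 0 < δ) (hrp : 1 < rp) :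
    Multiset.card ((Q q j (C (δ : ℂ)) X).roots.filter fun a => ‖a‖ < rp) = j := by
  obtain ⟨r, h1r, hrrp⟩ := exists_between hrp
  have hQ0 : Q q j (C (δ : ℂ)) X ≠ 0 := fun h0 => by
    simpa [eval_Q, Q, hδ.ne', Nat.pos_iff_ne_zero.1 hj] using congrArg (eval 0) h0
  -- no root of `Q` lies in the annulus `1 < ‖a‖ < rp`
  have hsame : (Q q j (C (δ : ℂ)) X).roots.filter (fun a => ‖a‖ < rp)
      = (Q q j (C (δ : ℂ)) X).roots.filter (fun a => dist a 0 < r) := by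
    refine Multiset.filter_congr fun a ha => ?_
    rw [dist_zero_right]
    refine ⟨fun harp => ?_, fun har => by linarith⟩
    by_contra! hra
    have := norm_eval_Q_sub_lt huniq hj hjq hδ (by linarith) harp
    rw [(mem_roots hQ0).1 ha, zero_sub, norm_neg] at this
    exact lt_irrefl _ this
  rw [hsame, card_roots_filter_eq_of_norm_sub_lt_s8 (f := C (δ : ℂ) - C (1 + (δ : ℂ)) * X ^ j)
    (by positivity) fun z hz => ?_]
  · refine card_roots_C_sub_C_mul_X_pow_filter ?_ j (by linarith)
    rw [show (1 : ℂ) + δ = ((1 + δ : ℝ) : ℂ) by push_cast; rfl, norm_real, norm_real,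
      Real.norm_of_nonneg hδ.le, Real.norm_of_nonneg (by linarith)]
    exact lt_one_add δ
  · rw [mem_sphere_zero_iff_norm] at hz
    exact norm_eval_Q_sub_lt huniq hj hjq hδ (by linarith) (by linarith)

end Real

end Trinomial

open Trinomial

theorem stmt_8_general (q j : ℕ) (hj : 1 ≤ j) (hjq : j ≤ q) (δ : ℝ)
    (hδs : ((q : ℝ) + 1 - j) / j < δ) (rp : ℝ)
    (huniq : ∀ y : ℝ, 0 < y →
      (∑ k ∈ Finset.Icc j q, y ^ k) - δ * ∑ k ∈ Finset.range j, y ^ k = 0 → y = rp) :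
    1 < rp ∧
    Multiset.card ((((X : ℂ[X]) ^ (q + 1) - C ((1 : ℂ) + (δ : ℂ)) * X ^ j + C (δ : ℂ)).roots).filter
      (fun z => ‖z‖ < rp)) = j ∧
    Multiset.card ((((∑ k ∈ Finset.Icc j q, (X : ℂ[X]) ^ k)
        - C (δ : ℂ) * ∑ k ∈ Finset.range j, (X : ℂ[X]) ^ k).roots).filter
      (fun z => ‖z‖ < rp)) = j - 1 := by
  have hP1 : P q j δ 1 < 0 := P_one_neg hj hjq hδs
  have hδ : 0 < δ := pos_of_P_one_neg hjq hP1
  have hrp : 1 < rp := one_lt_of_forall_P_eq_zero huniq hjq hδ hP1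
  have hQ := card_roots_Q_filter_norm_lt huniq hj hjq hδ hrp
  have hQX : Q q j (C (δ : ℂ)) X
      = X ^ (q + 1) - C ((1 : ℂ) + (δ : ℂ)) * X ^ j + C (δ : ℂ) := by
    simp [Q]
  refine ⟨hrp, hQX ▸ hQ, ?_⟩
  have hPQ : (X - C 1) * P q j (C (δ : ℂ)) X = Q q j (C (δ : ℂ)) X := by
    simpa using sub_one_mul_P (by omega) X
  have hP0 : P q j (C (δ : ℂ)) X ≠ 0 := by
    intro hP0
    rw [← hPQ, hP0, mul_zero, roots_zero] at hQ
    simp at hQ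
    omega
  rw [← hPQ, card_roots_filter_X_sub_C_mul hP0 (by simpa using hrp)] at hQ
  exact Nat.eq_sub_of_add_eq hQ

/-- for `δ > δ* = (q+1−j)/j`, the unique positive real root `r₊`
of `P` satisfies `r₊ > 1`, `Q` has exactly `j` complex roots (with
multiplicity) in the open disk `|z| < r₊`, and `P` has exactly `j − 1` such
roots. -/
theorem stmt_8 (q j : ℕ) (hj : 1 ≤ j) (hjq : j ≤ q) (δ : ℝ)
    (hδs : ((q : ℝ) + 1 - j) / j < δ) (rp : ℝ) (hrp : 0 < rp)
    (hroot : (∑ k ∈ Finset.Icc j q, rp ^ k) - δ * ∑ k ∈ Finset.range j, rp ^ k = 0)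
    (huniq : ∀ y : ℝ, 0 < y →
      (∑ k ∈ Finset.Icc j q, y ^ k) - δ * ∑ k ∈ Finset.range j, y ^ k = 0 → y = rp) :
    1 < rp ∧
    Multiset.card ((((X : ℂ[X]) ^ (q + 1) - C ((1 : ℂ) + (δ : ℂ)) * X ^ j + C (δ : ℂ)).roots).filter
      (fun z => ‖z‖ < rp)) = j ∧
    Multiset.card ((((∑ k ∈ Finset.Icc j q, (X : ℂ[X]) ^ k)
        - C (δ : ℂ) * ∑ k ∈ Finset.range j, (X : ℂ[X]) ^ k).roots).filter
      (fun z => ‖z‖ < rp)) = j - 1 :=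
  stmt_8_general q j hj hjq δ hδs rp huniq
end

section
/- Let q, j be integers with 1 ≤ j ≤ q, where j and q are both even, and let δ > 0 be real. Then Q has exactly one negative real root: there is a unique real x < 0 with Q(x) = 0 (and, since Q = (λ−1)P, this x is also a root of P). -/
/-- for `j` and `q` both even and `δ > 0`, `Q` has exactly one
negative real root, and this root is also a root of `P` (since `Q = (λ−1)P`). -/
theorem stmt_9 (q j : ℕ) (hj : 1 ≤ j) (hjq : j ≤ q) (hje : Even j) (hqe : Even q)
    (δ : ℝ) (hδ : 0 < δ) :
    (∃! x : ℝ, x < 0 ∧ x ^ (q + 1) - (1 + δ) * x ^ j + δ = 0) ∧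
    ∀ x : ℝ, x < 0 → x ^ (q + 1) - (1 + δ) * x ^ j + δ = 0 →
      (∑ k ∈ Finset.Icc j q, x ^ k) - δ * ∑ k ∈ Finset.range j, x ^ k = 0 := by
  have hjne : j ≠ 0 := by omega
  have hodd : Odd (q + 1) := hqe.add_one
  set g : ℝ → ℝ := fun t => t ^ (q + 1) + (1 + δ) * t ^ j with hg
  have hmono : StrictMonoOn g (Set.Ici (0:ℝ)) := by
    intro a ha b hb hab
    simp only [hg]
    have h1 : a ^ (q + 1) < b ^ (q + 1) := pow_lt_pow_left₀ hab ha (by omega)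
    have h2 : a ^ j < b ^ j := pow_lt_pow_left₀ hab ha hjne
    have h3 : (0:ℝ) < 1 + δ := by linarith
    nlinarith
  have hQg : ∀ t : ℝ, (-t) ^ (q + 1) - (1 + δ) * (-t) ^ j + δ = δ - g t := by
    intro t
    rw [hodd.neg_pow, hje.neg_pow]
    simp only [hg]; ring
  -- existence of t > 0 with g t = δ
  set M : ℝ := max 1 δ with hM
  have hM1 : (1:ℝ) ≤ M := le_max_left _ _
  have hMδ : δ ≤ M := le_max_right _ _
  have hMj : M ≤ M ^ j := le_self_pow₀ (by linarith) hjne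
  have hgM : δ ≤ g M := by
    have h1 : (0:ℝ) ≤ M ^ (q + 1) := by positivity
    have h2 : M ^ j ≤ (1 + δ) * M ^ j := by nlinarith
    simp only [hg]; nlinarith
  have hcont : ContinuousOn g (Set.Icc 0 M) := by fun_prop
  have hg0 : g 0 = 0 := by simp [hg, zero_pow hjne]
  have hiv := intermediate_value_Icc (by linarith : (0:ℝ) ≤ M) hcont
  obtain ⟨t, ht, hgt⟩ := hiv (by rw [hg0]; exact ⟨hδ.le, hgM⟩)
  have ht0 : 0 < t := by
    rcases lt_or_eq_of_le ht.1 with h | h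
    · exact h
    · exfalso; rw [← h, hg0] at hgt; linarith
  constructor
  · refine ⟨-t, ⟨by linarith, by rw [hQg]; linarith⟩, ?_⟩
    rintro y ⟨hy, hyQ⟩
    have : g (-y) = g t := by
      have := hQg (-y); rw [neg_neg] at this; rw [this] at hyQ
      rw [hgt]; linarith
    have : -y = t := hmono.injOn (by simp; linarith) (Set.mem_Ici.mpr ht0.le) this
    linarith [this]
  · intro x hx hQ
    have hA : (∑ i ∈ Finset.range (q + 1), x ^ i) * (x - 1) = x ^ (q + 1) - 1 :=
      geom_sum_mul x (q + 1)
    have hB : (∑ i ∈ Finset.range j, x ^ i) * (x - 1) = x ^ j - 1 :=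
      geom_sum_mul x j
    have hIcc : ∑ k ∈ Finset.Icc j q, x ^ k =
        (∑ i ∈ Finset.range (q + 1), x ^ i) - ∑ i ∈ Finset.range j, x ^ i := by
      rw [← Finset.Ico_add_one_right_eq_Icc, Finset.sum_Ico_eq_sub _ (by omega)]
    have hx1 : x - 1 ≠ 0 := by linarith
    have key : ((∑ k ∈ Finset.Icc j q, x ^ k) - δ * ∑ k ∈ Finset.range j, x ^ k)
        * (x - 1) = x ^ (q + 1) - (1 + δ) * x ^ j + δ := by
      rw [hIcc]; linear_combination hA - (1 + δ) * hB
    have := key.trans hQ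
    exact (mul_eq_zero.mp this).resolve_right hx1
end

section
/- Let q ≥ 1 be an integer, let δ > 0 and r > 0 be real numbers with r^q = δ·(r^{q−1} + ⋯ + r + 1). Let M be the q×q real matrix with M_{i,1} = δ for all 1 ≤ i ≤ q, M_{i,i+1} = 1 for 1 ≤ i ≤ q−1, and all other entries 0. Define v ∈ ℝ^q by v_1 = 1 and v_i = (δ/r)·Σ_{k=0}^{q−i} r^{−k} for 2 ≤ i ≤ q. Then M·v = r·v, and every entry of v is strictly positive. -/
/-- for the transition matrix `M` of the maximally-active cycle
(the case `q = j`, all rows starting with `δ`), the vector `v` with `v₁ = 1`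
and `vᵢ = (δ/r)·Σ_{k=0}^{q−i} r^{−k}` is an eigenvector for the positive
eigenvalue `r` (the positive root of `λ^q − δ(λ^{q−1}+⋯+1)`), and all entries
of `v` are strictly positive. -/
theorem stmt_12 (q : ℕ) (hq : 1 ≤ q) (δ r : ℝ) (hδ : 0 < δ) (hr : 0 < r)
    (hroot : r ^ q = δ * ∑ k ∈ Finset.range q, r ^ k) :
    let M : Matrix (Fin q) (Fin q) ℝ := Matrix.of (fun i k : Fin q =>
      if (k : ℕ) = 0 then δ else if (k : ℕ) = (i : ℕ) + 1 then 1 else 0)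
    let v : Fin q → ℝ := fun i =>
      if (i : ℕ) = 0 then 1 else (δ / r) * ∑ k ∈ Finset.range (q - (i : ℕ)), (r⁻¹) ^ k
    M.mulVec v = r • v ∧ ∀ i, 0 < v i := by
  intro M v
  have hr0 : r ≠ 0 := hr.ne'
  -- key identity: δ * Σ_{k<q} r⁻ᵏ = r
  have hA : δ * ∑ k ∈ Finset.range q, r⁻¹ ^ k = r := by
    have h1 : (∑ k ∈ Finset.range q, r⁻¹ ^ k) * r ^ (q - 1)
        = ∑ k ∈ Finset.range q, r ^ k := by
      rw [Finset.sum_mul, ← Finset.sum_range_reflect (fun k => r ^ k) q]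
      refine Finset.sum_congr rfl fun k hk => ?_
      rw [Finset.mem_range] at hk
      rw [inv_pow, inv_mul_eq_div]
      exact (pow_sub₀ r hr0 (by omega)).symm
    have h2 : r ^ q = r * r ^ (q - 1) := by
      rw [← pow_succ']
      congr 1
      omega
    have h3 : (δ * ∑ k ∈ Finset.range q, r⁻¹ ^ k) * r ^ (q - 1) = r * r ^ (q - 1) := by
      rw [mul_assoc, h1, ← h2, hroot]
    exact mul_right_cancel₀ (pow_ne_zero _ hr0) h3
  have hvdef : ∀ i : Fin q, v i = if (i : ℕ) = 0 then 1
      else (δ / r) * ∑ k ∈ Finset.range (q - (i : ℕ)), r⁻¹ ^ k := fun _ => rfl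
  -- uniform formula for v
  have hv : ∀ i : Fin q, v i = (δ / r) * ∑ k ∈ Finset.range (q - (i : ℕ)), r⁻¹ ^ k := by
    intro i
    rw [hvdef i]
    by_cases h : (i : ℕ) = 0
    · have : δ / r * ∑ k ∈ Finset.range q, r⁻¹ ^ k = 1 := by
        rw [div_mul_eq_mul_div, hA, div_self hr0]
      rw [if_pos h, h, Nat.sub_zero]
      exact this.symm
    · simp [h]
  have hxpos : (0:ℝ) < r⁻¹ := inv_pos.mpr hr
  have hpos : ∀ i : Fin q, 0 < v i := by
    intro i
    have hi := i.2
    rw [hv i]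
    refine mul_pos (div_pos hδ hr) ?_
    refine Finset.sum_pos (fun k _ => pow_pos hxpos k) ?_
    rw [Finset.nonempty_range_iff]
    omega
  refine ⟨?_, hpos⟩
  funext i
  have hi := i.2
  show ∑ k : Fin q, (if (k : ℕ) = 0 then δ else if (k : ℕ) = (i : ℕ) + 1 then 1 else 0) * v k
      = r * v i
  have hrv : r * v i = δ * ∑ k ∈ Finset.range (q - (i : ℕ)), r⁻¹ ^ k := by
    rw [hv i, ← mul_assoc, mul_div_cancel₀ _ hr0]
  rcases Nat.lt_or_ge ((i : ℕ) + 1) q with hlt | hge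
  · -- not the last row
    have hsplit : ∀ k : Fin q,
        (if (k : ℕ) = 0 then δ else if (k : ℕ) = (i : ℕ) + 1 then 1 else 0) * v k
        = (if k = (⟨0, hq⟩ : Fin q) then δ * v k else 0)
          + (if k = (⟨(i : ℕ) + 1, hlt⟩ : Fin q) then v k else 0) := by
      intro k
      rcases eq_or_ne (k : ℕ) 0 with h0 | h0
      · have hk0 : k = ⟨0, hq⟩ := Fin.ext h0
        simp [h0, hk0]
      · have hk0 : k ≠ (⟨0, hq⟩ : Fin q) := by simpa [Fin.ext_iff] using h0
        by_cases h1 : (k : ℕ) = (i : ℕ) + 1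
        · have hk1 : k = ⟨(i : ℕ) + 1, hlt⟩ := Fin.ext h1
          simp [h0, h1, hk0, hk1]
        · have hk1 : k ≠ (⟨(i : ℕ) + 1, hlt⟩ : Fin q) := by simpa [Fin.ext_iff] using h1
          simp [h0, h1, hk0, hk1]
    rw [Finset.sum_congr rfl (fun k _ => hsplit k), Finset.sum_add_distrib,
      Finset.sum_ite_eq' Finset.univ, Finset.sum_ite_eq' Finset.univ]
    simp only [Finset.mem_univ, if_true]
    have h0 : v (⟨0, hq⟩ : Fin q) = 1 := by rw [hvdef]; simp
    have h1 : v (⟨(i : ℕ) + 1, hlt⟩ : Fin q)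
        = (δ / r) * ∑ k ∈ Finset.range (q - ((i : ℕ) + 1)), r⁻¹ ^ k := hv _
    rw [h0, h1, hrv]
    have hq' : q - (i : ℕ) = (q - ((i : ℕ) + 1)) + 1 := by omega
    rw [hq', geom_sum_succ]
    field_simp
    ring
  · -- last row: (i:ℕ) + 1 = q
    have hlast : (i : ℕ) + 1 = q := by omega
    have hsplit : ∀ k : Fin q,
        (if (k : ℕ) = 0 then δ else if (k : ℕ) = (i : ℕ) + 1 then 1 else 0) * v k
        = (if k = (⟨0, hq⟩ : Fin q) then δ * v k else 0) := by
      intro k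
      have hk2 := k.2
      have h1 : (k : ℕ) ≠ (i : ℕ) + 1 := by omega
      rcases eq_or_ne (k : ℕ) 0 with h0 | h0
      · have hk0 : k = ⟨0, hq⟩ := Fin.ext h0
        simp [h0, hk0]
      · have hk0 : k ≠ (⟨0, hq⟩ : Fin q) := by simpa [Fin.ext_iff] using h0
        simp [h0, h1, hk0]
    rw [Finset.sum_congr rfl (fun k _ => hsplit k), Finset.sum_ite_eq' Finset.univ]
    simp only [Finset.mem_univ, if_true]
    have h0 : v (⟨0, hq⟩ : Fin q) = 1 := by rw [hvdef]; simp
    rw [h0, hrv]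
    have : q - (i : ℕ) = 1 := by omega
    rw [this]
    simp
end

section
/- Let n ≥ 1 be an integer, let A : Fin n → Fin n → ℝ, let r, γ ∈ ℝ with r ≠ 0, and set x̂ = (r−1)/r. Let S ⊆ Fin n be a set with A(α, β) = 0 for all α, β ∈ S. Define F : (Fin n → ℝ) → (Fin n → ℝ) by F(x)(k) = r·x(k)·(1 − x(k))·exp(−γ·Σ_{k̂} A(k̂, k)·x(k̂)), and define ξ : Fin n → ℝ by ξ(k) = x̂ if k ∈ S and ξ(k) = 0 otherwise. Let J be the n×n Jacobian matrix of F at ξ, i.e. J_{k,l} = ∂F(x)(k)/∂x(l) evaluated at x = ξ. Then the characteristic polynomial of J is det(λI − J) = (λ − (2 − r))^{|S|} · ∏_{k ∉ S} (λ − r·exp(−γ·x̂·Σ_{α ∈ S} A(α, k))). In particular the eigenvalues of J are 2 − r with multiplicity |S| (the active directions) and, for each inactive node k, the value r·exp(−γ·x̂·n_s(k)), where n_s(k) = Σ_{α ∈ S} A(α, k) is the suppression number of k. -/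
/-!
At `ξ` the Jacobian has entries `(δ_kl r (1 - 2ξ_k) - γ A_lk r ξ_k (1 - ξ_k)) e^{-γ x̂ n_s(k)}`.
For inactive `k` the factor `ξ_k = 0` kills the coupling term, and for `k, l ∈ S` it is killed by
`A_lk = 0`. So the only nonzero off-diagonal entries lie in rows of `S` and columns outside `S`:
the Jacobian is block triangular with diagonal diagonal blocks, and its characteristic polynomial
is the product of `X - J_kk`, with `J_kk = 2 - r` on `S` and `r e^{-γ x̂ n_s(k)}` off `S`.
-/

open Polynomial

namespace Matrix

variable {m R : Type*} [DecidableEq m] [CommRing R]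

theorem toSquareBlockProp_eq_diagonal (M : Matrix m m R) (p : m → Prop)
    (h : ∀ i j, p i → p j → i ≠ j → M i j = 0) :
    M.toSquareBlockProp p = diagonal fun i : {a // p a} => M i i := by
  ext i j
  by_cases hij : i = j
  · subst hij
    rw [diagonal_apply_eq]
    rfl
  · rw [diagonal_apply_ne _ hij]
    exact h i j i.2 j.2 fun e => hij (Subtype.ext e)

theorem det_eq_prod_diag_of_offDiag [Fintype m] (M : Matrix m m R) (p : m → Prop)
    [DecidablePred p]
    (h : ∀ i j, i ≠ j → M i j ≠ 0 → p i ∧ ¬p j) : M.det = ∏ i, M i i := by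
  have hzero : ∀ i j, i ≠ j → ¬(p i ∧ ¬p j) → M i j = 0 := fun i j hij hp =>
    not_not.mp fun hne => hp (h i j hij hne)
  rw [twoBlockTriangular_det M p fun i hi j hj => hzero i j (fun e => hi (e ▸ hj)) (by tauto),
    toSquareBlockProp_eq_diagonal M p fun i j _ hj hij => hzero i j hij (by tauto),
    toSquareBlockProp_eq_diagonal M _ fun i j hi _ hij => hzero i j hij (by tauto),
    det_diagonal, det_diagonal]
  exact Fintype.prod_subtype_mul_prod_subtype p fun i => M i i

theorem charpoly_eq_prod_of_offDiag [Fintype m] (M : Matrix m m R) (p : m → Prop)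
    [DecidablePred p]
    (h : ∀ i j, i ≠ j → M i j ≠ 0 → p i ∧ ¬p j) : M.charpoly = ∏ i, (X - C (M i i)) := by
  refine (det_eq_prod_diag_of_offDiag _ p fun i j hij hne => h i j hij fun hM => hne ?_).trans
    (Finset.prod_congr rfl fun i _ => charmatrix_apply_eq M i)
  rw [charmatrix_apply_ne M i j hij, hM, map_zero, neg_zero]

end Matrix

section CoupledLogistic

variable {ι : Type*} [Fintype ι] [DecidableEq ι]

theorem fderiv_coupledLogistic_apply_single (A : ι → ι → ℝ) (r γ : ℝ) (x : ι → ℝ) (k l : ι) :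
    fderiv ℝ (fun y : ι → ℝ => r * y k * (1 - y k) * Real.exp (-γ * ∑ j, A j k * y j)) x
        (Pi.single l 1)
      = ((if k = l then r * (1 - 2 * x k) else 0) - γ * A l k * (r * x k * (1 - x k)))
        * Real.exp (-γ * ∑ j, A j k * x j) := by
  have hcoord (j : ι) : HasFDerivAt (fun y : ι → ℝ => y j)
      (ContinuousLinearMap.proj j : (ι → ℝ) →L[ℝ] ℝ) x := hasFDerivAt_apply j x
  have hsum : HasFDerivAt (fun y : ι → ℝ => ∑ j, A j k * y j)
      (∑ j, A j k • (ContinuousLinearMap.proj j : (ι → ℝ) →L[ℝ] ℝ)) x :=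
    HasFDerivAt.fun_sum fun j _ => (hcoord j).const_mul (A j k)
  rw [((((hcoord k).const_mul r).fun_mul ((hcoord k).const_sub 1)).fun_mul
    ((hsum.const_mul (-γ)).exp)).fderiv]
  simp only [Finset.mul_sum, mul_comm, mul_neg, Finset.sum_neg_distrib, neg_smul, smul_neg,
    smul_add, add_apply, neg_apply, smul_apply, sum_apply, ContinuousLinearMap.proj_apply,
    Pi.single_apply, eq_comm, smul_eq_mul, mul_ite, mul_one, mul_zero, Finset.sum_ite_eq,
    Finset.mem_univ, if_true, ite_mul, zero_mul]
  split_ifs <;> ring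

theorem sum_mul_ite_mem {R : Type*} [CommSemiring R] (A : ι → R) (S : Finset ι) (c : R) :
    ∑ j, A j * (if j ∈ S then c else 0) = c * ∑ j ∈ S, A j := by
  simp only [mul_ite, mul_zero, Finset.sum_ite_mem, Finset.univ_inter, Finset.mul_sum, mul_comm]

end CoupledLogistic

theorem stmt_16_general (n : ℕ) (A : Fin n → Fin n → ℝ) (r γ : ℝ) (hr : r ≠ 0)
    (S : Finset (Fin n)) (hS : ∀ α ∈ S, ∀ β ∈ S, A α β = 0) :
    let xhat : ℝ := (r - 1) / r
    let F : (Fin n → ℝ) → (Fin n → ℝ) := fun x k =>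
      r * x k * (1 - x k) * Real.exp (-γ * ∑ khat, A khat k * x khat)
    let ξ : Fin n → ℝ := fun k => if k ∈ S then xhat else 0
    let J : Matrix (Fin n) (Fin n) ℝ := Matrix.of fun k l =>
      fderiv ℝ (fun x => F x k) ξ (Pi.single l 1)
    J.charpoly = (X - C (2 - r)) ^ S.card *
      ∏ k ∈ Sᶜ, (X - C (r * Real.exp (-γ * xhat * ∑ α ∈ S, A α k))) := by
  intro xhat F ξ J
  have hJ (k l : Fin n) : J k l =
      ((if k = l then r * (1 - 2 * ξ k) else 0) - γ * A l k * (r * ξ k * (1 - ξ k)))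
        * Real.exp (-γ * (xhat * ∑ α ∈ S, A α k)) := by
    rw [← sum_mul_ite_mem]
    exact fderiv_coupledLogistic_apply_single A r γ ξ k l
  have hoffDiag (k l : Fin n) (hkl : k ≠ l) (hne : J k l ≠ 0) : k ∈ S ∧ l ∉ S := by
    rw [hJ, if_neg hkl] at hne
    by_cases hk : k ∈ S
    · exact ⟨hk, fun hl => hne (by simp [hS l hl k hk])⟩
    · simp [ξ, hk] at hne
  have hdiag (k : Fin n) :
      J k k = if k ∈ S then 2 - r else r * Real.exp (-γ * xhat * ∑ α ∈ S, A α k) := by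
    rw [hJ, if_pos rfl]
    split_ifs with hk
    · simp only [ξ, xhat, if_pos hk, hS k hk k hk, Finset.sum_eq_zero fun α hα => hS α hα k hk,
        mul_zero, Real.exp_zero, mul_one]
      field_simp
      ring
    · simp [ξ, hk, mul_assoc]
  rw [Matrix.charpoly_eq_prod_of_offDiag J (· ∈ S) hoffDiag, ← Finset.prod_mul_prod_compl S]
  congr 1
  · rw [← Finset.prod_const]
    exact Finset.prod_congr rfl fun k hk => by rw [hdiag, if_pos hk]
  · exact Finset.prod_congr rfl fun k hk => by rw [hdiag, if_neg (Finset.mem_compl.mp hk)]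

/-- the Jacobian matrix `J` of the coupled logistic map `F` at
the fixed point `ξ` (active set `S`, an independent set) has characteristic
polynomial `(λ − (2−r))^{|S|} · ∏_{k ∉ S} (λ − r·exp(−γ·x̂·Σ_{α∈S} A(α,k)))`. -/
theorem stmt_16 (n : ℕ) (hn : 1 ≤ n) (A : Fin n → Fin n → ℝ) (r γ : ℝ) (hr : r ≠ 0)
    (S : Finset (Fin n)) (hS : ∀ α ∈ S, ∀ β ∈ S, A α β = 0) :
    let xhat : ℝ := (r - 1) / r
    let F : (Fin n → ℝ) → (Fin n → ℝ) := fun x k =>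
      r * x k * (1 - x k) * Real.exp (-γ * ∑ khat, A khat k * x khat)
    let ξ : Fin n → ℝ := fun k => if k ∈ S then xhat else 0
    let J : Matrix (Fin n) (Fin n) ℝ := Matrix.of fun k l =>
      fderiv ℝ (fun x => F x k) ξ (Pi.single l 1)
    J.charpoly = (X - C (2 - r)) ^ S.card *
      ∏ k ∈ Sᶜ, (X - C (r * Real.exp (-γ * xhat * ∑ α ∈ S, A α k))) :=
  stmt_16_general n A r γ hr S hS
end

section
/- Let q, j be integers with 1 ≤ j ≤ q and let δ > 0 be real with j·(1+δ) < q + 1 (i.e. δ < δ* = (q+1−j)/j). Then for every real ε with 0 < ε < 2·(q + 1 − j·(1+δ))/(q·(q+1)), the strict inequality (1+δ)·(1−ε)^j > (1−ε)^{q+1} + δ holds. -/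
/-!
Put `x = 1 - ε`. Bernoulli's inequality bounds `x ^ j` below by `1 - j ε`, and the second-order
Bernoulli inequality bounds `x ^ (q + 1)` above by `1 - (q + 1) ε + q (q + 1) / 2 · ε ^ 2`.
The difference of the two resulting bounds is `ε (q + 1 - j (1 + δ) - q (q + 1) ε / 2)`,
which the hypothesis on `ε` makes positive.
-/

lemma one_sub_pow_le_one_sub_mul_add_choose_two_mul_sq (n : ℕ) {x : ℝ} (hx0 : 0 ≤ x)
    (hx1 : x ≤ 1) : (1 - x) ^ n ≤ 1 - n * x + n.choose 2 * x ^ 2 := by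
  induction n with
  | zero => simp
  | succ n ih =>
    have hstep : (1 - x) ^ (n + 1) ≤ (1 - x) * (1 - n * x + n.choose 2 * x ^ 2) := by
      rw [pow_succ, mul_comm]
      exact mul_le_mul_of_nonneg_left ih (by linarith)
    have hcubic : 0 ≤ (n.choose 2 : ℝ) * x ^ 3 := by positivity
    rw [Nat.choose_succ_succ, Nat.choose_one_right]
    push_cast
    nlinarith

theorem stmt_17_general (q j : ℕ) (hj : 1 ≤ j) (δ : ℝ) (hδ : 0 < δ)
    (hδs : (j : ℝ) * (1 + δ) < (q : ℝ) + 1) (ε : ℝ) (hε0 : 0 < ε)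
    (hε : ε < 2 * ((q : ℝ) + 1 - (j : ℝ) * (1 + δ)) / ((q : ℝ) * ((q : ℝ) + 1))) :
    (1 - ε) ^ (q + 1) + δ < (1 + δ) * (1 - ε) ^ j := by
  have hj1 : (1 : ℝ) ≤ j := by exact_mod_cast hj
  have hjδ : 1 < j * (1 + δ) := by nlinarith
  have hq1 : (1 : ℝ) ≤ q := by
    have : (0 : ℝ) < q := by linarith
    exact_mod_cast (Nat.cast_pos.mp this : 0 < q)
  have hε' : ε * (q * (q + 1)) < 2 * (q + 1 - j * (1 + δ)) :=
    (lt_div_iff₀ (by positivity)).mp hε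
  -- `j (1 + δ) > 1` pushes the bound on `ε` below `2 / (q + 1) ≤ 1`.
  have hε1 : ε ≤ 1 := by nlinarith [mul_le_mul_of_nonneg_left hq1 hε0.le]
  have hlower : 1 - j * ε ≤ (1 - ε) ^ j := by
    simpa [mul_comm, ← sub_eq_add_neg] using one_add_mul_le_pow (a := -ε) (by linarith) j
  calc (1 - ε) ^ (q + 1) + δ
      ≤ 1 - (q + 1 : ℕ) * ε + (q + 1).choose 2 * ε ^ 2 + δ := by
        gcongr
        exact one_sub_pow_le_one_sub_mul_add_choose_two_mul_sq _ hε0.le hε1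
    _ < (1 + δ) * (1 - j * ε) := by
        rw [Nat.cast_choose_two]
        push_cast
        nlinarith
    _ ≤ (1 + δ) * (1 - ε) ^ j := by gcongr

/-- the Rouché inequality on the circle `|λ| = 1 − ε` in the case
`δ < δ* = (q+1−j)/j`: for `0 < ε < 2(q+1−j(1+δ))/(q(q+1))` one has
`(1+δ)(1−ε)^j > (1−ε)^{q+1} + δ`. -/
theorem stmt_17 (q j : ℕ) (hj : 1 ≤ j) (hjq : j ≤ q) (δ : ℝ) (hδ : 0 < δ)
    (hδs : (j : ℝ) * (1 + δ) < (q : ℝ) + 1) (ε : ℝ) (hε0 : 0 < ε)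
    (hε : ε < 2 * ((q : ℝ) + 1 - (j : ℝ) * (1 + δ)) / ((q : ℝ) * ((q : ℝ) + 1))) :
    (1 - ε) ^ (q + 1) + δ < (1 + δ) * (1 - ε) ^ j :=
  stmt_17_general q j hj δ hδ hδs ε hε0 hε
end

section
/- Let q, j be integers with 1 ≤ j ≤ q and let δ > 0 be real. Let r > 0 be a real number with r^{q+1} = (1+δ)·r^j − δ (i.e. Q(r) = 0). Then for every real ε with 0 < ε < 1 and ε < 2·(q + 1 − j·(1+δ)/r^{q+1−j})/(q·(q+1)), the strict inequality (1+δ)·(1−ε)^j·r^j > (1−ε)^{q+1}·r^{q+1} + δ holds. -/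
/-- the Rouché inequality on the circle `|λ| = (1−ε)·r`, where
`r` is a positive root of `Q(λ) = λ^{q+1} − (1+δ)λ^j + δ`: for `0 < ε < 1`
with `ε < 2(q+1−j(1+δ)/r^{q+1−j})/(q(q+1))` one has
`(1+δ)(1−ε)^j r^j > (1−ε)^{q+1} r^{q+1} + δ`. -/
theorem stmt_18 (q j : ℕ) (hj : 1 ≤ j) (hjq : j ≤ q) (δ : ℝ) (hδ : 0 < δ)
    (r : ℝ) (hr : 0 < r) (hroot : r ^ (q + 1) = (1 + δ) * r ^ j - δ)
    (ε : ℝ) (hε0 : 0 < ε) (hε1 : ε < 1)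
    (hε : ε < 2 * ((q : ℝ) + 1 - (j : ℝ) * (1 + δ) / r ^ (q + 1 - j))
      / ((q : ℝ) * ((q : ℝ) + 1))) :
    (1 - ε) ^ (q + 1) * r ^ (q + 1) + δ < (1 + δ) * (1 - ε) ^ j * r ^ j := by
  set s : ℝ := 1 - ε with hs
  set m : ℝ := r ^ (q + 1 - j) with hmdef
  set c : ℝ := 1 + δ with hcdef
  have hs0 : 0 < s := by rw [hs]; linarith
  have hs1 : s < 1 := by rw [hs]; linarith
  have hm : 0 < m := pow_pos hr _
  have hrj : 0 < r ^ j := pow_pos hr _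
  have hc0 : (0:ℝ) < c := by rw [hcdef]; linarith
  have hsplit : r ^ (q + 1) = r ^ j * m := by
    rw [hmdef, ← pow_add]; congr 1; omega
  have h1 : r ^ j * m = c * r ^ j - δ := by rw [← hsplit]; exact hroot
  have hδeq : δ = r ^ j * (c - m) := by linear_combination h1
  set Sq : ℝ := ∑ k ∈ Finset.range (q + 1), s ^ k with hSqdef
  set Sj : ℝ := ∑ k ∈ Finset.range j, s ^ k with hSjdef
  have hgq := geom_sum_mul s (q + 1)
  have hgj := geom_sum_mul s j
  have hSq_geom : ε * Sq = 1 - s ^ (q + 1) := by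
    rw [hSqdef]; linear_combination -hgq + (∑ k ∈ Finset.range (q + 1), s ^ k) * hs
  have hSj_geom : ε * Sj = 1 - s ^ j := by
    rw [hSjdef]; linear_combination -hgj + (∑ k ∈ Finset.range j, s ^ k) * hs
  -- lower bound on Sq
  have hSq_lb : (q:ℝ) + 1 - ε * ((q:ℝ) * ((q:ℝ) + 1) / 2) ≤ Sq := by
    have hterm : ∀ k ∈ Finset.range (q + 1), 1 - (k:ℝ) * ε ≤ s ^ k := by
      intro k _
      have h := one_add_mul_le_pow (a := -ε) (by linarith) k
      have : (1 : ℝ) + (k:ℝ) * (-ε) ≤ (1 + -ε) ^ k := h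
      have hseq : (1 : ℝ) + -ε = s := by rw [hs]; ring
      rw [hseq] at this; linarith
    have hsum := Finset.sum_le_sum hterm
    have hgauss : (∑ k ∈ Finset.range (q + 1), (k:ℝ)) = (q:ℝ) * ((q:ℝ) + 1) / 2 := by
      have := Finset.sum_range_id_mul_two (q + 1)
      have : ((∑ i ∈ Finset.range (q + 1), (i:ℕ) : ℕ) : ℝ) * 2 = ((q + 1 : ℕ) : ℝ) * (q : ℝ) := by
        exact_mod_cast congrArg (Nat.cast : ℕ → ℝ) this
      push_cast at this ⊢
      linarith
    have hlhs : (∑ k ∈ Finset.range (q + 1), (1 - (k:ℝ) * ε))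
        = (q:ℝ) + 1 - ε * ((q:ℝ) * ((q:ℝ) + 1) / 2) := by
      rw [Finset.sum_sub_distrib]
      simp only [Finset.sum_const, Finset.card_range, nsmul_eq_mul, mul_one]
      rw [← Finset.sum_mul, hgauss]
      push_cast
      ring
    rw [hSqdef]
    calc (q:ℝ) + 1 - ε * ((q:ℝ) * ((q:ℝ) + 1) / 2)
        = ∑ k ∈ Finset.range (q + 1), (1 - (k:ℝ) * ε) := hlhs.symm
      _ ≤ ∑ k ∈ Finset.range (q + 1), s ^ k := hsum
  -- upper bound on Sj
  have hSj_ub : Sj ≤ (j:ℝ) := by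
    rw [hSjdef]
    calc (∑ k ∈ Finset.range j, s ^ k) ≤ ∑ _k ∈ Finset.range j, (1:ℝ) :=
          Finset.sum_le_sum (fun k _ => pow_le_one₀ hs0.le hs1.le)
      _ = (j:ℝ) := by simp
  -- exploit hε
  have hq1 : 1 ≤ q := le_trans hj hjq
  have hD : (0:ℝ) < (q:ℝ) * ((q:ℝ) + 1) := by
    have : (1:ℝ) ≤ (q:ℝ) := by exact_mod_cast hq1
    nlinarith
  have hεD : ε * ((q:ℝ) * ((q:ℝ) + 1)) < 2 * ((q:ℝ) + 1 - (j:ℝ) * c / m) :=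
    (lt_div_iff₀ hD).mp hε
  have hjc : m * ((j:ℝ) * c / m) = (j:ℝ) * c := by field_simp
  have key1 : m * (ε * ((q:ℝ) * ((q:ℝ) + 1))) < 2 * (m * ((q:ℝ) + 1) - (j:ℝ) * c) := by
    have h2 := mul_lt_mul_of_pos_left hεD hm
    nlinarith [h2, hjc]
  -- key inequality
  clear_value s m c Sq Sj
  have hSj0 : 0 ≤ Sj := by
    rw [hSjdef]; exact Finset.sum_nonneg (fun k _ => (pow_pos hs0 k).le)
  have K : c * Sj < m * Sq := by
    have step1 : c * Sj ≤ c * (j:ℝ) := by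
      exact mul_le_mul_of_nonneg_left hSj_ub hc0.le
    have step2 : c * (j:ℝ) < m * ((q:ℝ) + 1 - ε * ((q:ℝ) * ((q:ℝ) + 1) / 2)) := by
      linarith [key1]
    have step3 : m * ((q:ℝ) + 1 - ε * ((q:ℝ) * ((q:ℝ) + 1) / 2)) ≤ m * Sq :=
      mul_le_mul_of_nonneg_left hSq_lb hm.le
    linarith
  have h3 := mul_lt_mul_of_pos_left K hε0
  have hfin : c * (1 - s ^ j) < m * (1 - s ^ (q + 1)) := by
    have e1 : m * (ε * Sq) = m * (1 - s ^ (q + 1)) := by rw [hSq_geom]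
    have e2 : c * (ε * Sj) = c * (1 - s ^ j) := by rw [hSj_geom]
    linarith [h3, e1, e2]
  rw [hsplit, hδeq]
  linarith [mul_lt_mul_of_pos_left hfin hrj]
end
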